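/- For x ≥ 1/2, the second moment of K_n* equals K_n*(t²;x) = (n/(n+β))² x² + (n/(n+β)²)(1 + 2α + 2μ e_μ(−n r_n(x))/e_μ(n r_n(x))) x + (1/(n+β)²)(α² − (5/12 + μ e_μ(−n r_n(x))/e_μ(n r_n(x)))). -/

import Mathlib

noncomputable section

/-- θ_k = 0 if k even, 1 if k odd. -/
def theta (k : ℕ) : ℝ := if Even k then 0 else 1

/-- Dunkl coefficients γ_μ(n). -/
def gammaD (mu : ℝ) (n : ℕ) : ℝ :=
  if Even n then
    2 ^ n * (Nat.factorial (n / 2)) * Real.Gamma ((n / 2 : ℕ) + mu + 1 / 2) / Real.Gamma (mu + 1 / 2)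
  else
    2 ^ n * (Nat.factorial (n / 2)) * Real.Gamma ((n / 2 : ℕ) + mu + 3 / 2) / Real.Gamma (mu + 1 / 2)

/-- Dunkl exponential e_μ(x) = Σ xⁿ/γ_μ(n). -/
def eD (mu x : ℝ) : ℝ := ∑' n : ℕ, x ^ n / gammaD mu n

/-- r_n(x) = x - 1/(2n). -/
def rn (n : ℕ) (x : ℝ) : ℝ := x - 1 / (2 * n)

/-- Modified Dunkl Szász–Mirakjan–Kantorovich operator K_n. -/
def Kn (mu : ℝ) (n : ℕ) (f : ℝ → ℝ) (x : ℝ) : ℝ :=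
  (n / eD mu (n * rn n x)) * ∑' k : ℕ, (n * rn n x) ^ k / gammaD mu k *
    ∫ t in (((k : ℝ) + 2 * mu * theta k) / n)..(((k : ℝ) + 1 + 2 * mu * theta k) / n), f t

/-- Stancu-type modified Dunkl Szász–Kantorovich operator K_n^*. -/
def KnStar (mu a b : ℝ) (n : ℕ) (f : ℝ → ℝ) (x : ℝ) : ℝ :=
  (n / eD mu (n * rn n x)) * ∑' k : ℕ, (n * rn n x) ^ k / gammaD mu k *
    ∫ t in (((k : ℝ) + 2 * mu * theta k) / n)..(((k : ℝ) + 1 + 2 * mu * theta k) / n),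
      f ((n * t + a) / (n + b))

/-- Dunkl Szász–Kantorovich–Stancu operator T_n^*. -/
def TnStar (mu a b : ℝ) (n : ℕ) (f : ℝ → ℝ) (x : ℝ) : ℝ :=
  (n / eD mu (n * x)) * ∑' k : ℕ, (n * x) ^ k / gammaD mu k *
    ∫ t in (((k : ℝ) + 2 * mu * theta k) / n)..(((k : ℝ) + 1 + 2 * mu * theta k) / n),
      f ((n * t + a) / (n + b))

/-- Modulus of continuity of f on [0,∞). -/
def modCont (f : ℝ → ℝ) (d : ℝ) : ℝ :=
  sSup {y | ∃ t s : ℝ, 0 ≤ t ∧ 0 ≤ s ∧ |t - s| ≤ d ∧ y = |f t - f s|}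

/-! Write `[k]_μ = k + 2μθ_k`. The Dunkl coefficients satisfy `γ_μ(k+1) = [k+1]_μ γ_μ(k)`, and the
`k`-th interval of `K_n*` is `[[k]_μ/n, ([k]_μ+1)/n]`, over which `((nt+α)/(n+β))²` integrates to a
quadratic polynomial in `[k]_μ`. So `K_n*(t²;x)` is a combination of the moments
`Σ [k]_μ^j y^k/γ_μ(k)`, `j = 0, 1, 2`, at `y = n r_n(x) = nx - 1/2`. Shifting the index with the
recurrence gives `Σ [k]_μ y^k/γ_μ(k) = y e_μ(y)`, and, since `[k+1]_μ = [k]_μ + 1 + 2μ(-1)^k`,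
`Σ [k]_μ² y^k/γ_μ(k) = (y² + y) e_μ(y) + 2μ y e_μ(-y)`: this is where `e_μ(-n r_n(x))` comes from. -/

def dunklBracket (mu : ℝ) (k : ℕ) : ℝ := k + 2 * mu * theta k

lemma theta_nonneg (k : ℕ) : 0 ≤ theta k := by
  unfold theta; split_ifs <;> norm_num

lemma theta_succ (k : ℕ) : theta (k + 1) = theta k + (-1) ^ k := by
  rcases Nat.even_or_odd k with hk | hk
  · simp [theta, Nat.even_add_one, hk, hk.neg_one_pow]
  · simp [theta, Nat.even_add_one, Nat.not_even_iff_odd.mpr hk, hk.neg_one_pow]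

lemma dunklBracket_zero (mu : ℝ) : dunklBracket mu 0 = 0 := by
  simp [dunklBracket, theta]

lemma dunklBracket_succ (mu : ℝ) (k : ℕ) :
    dunklBracket mu (k + 1) = dunklBracket mu k + 1 + 2 * mu * (-1) ^ k := by
  simp only [dunklBracket, theta_succ]
  push_cast
  ring

lemma dunklBracket_succ_pos {mu : ℝ} (hmu : -1 / 2 < mu) (k : ℕ) :
    0 < dunklBracket mu (k + 1) := by
  have hk : (0 : ℝ) ≤ k := k.cast_nonneg
  unfold dunklBracket theta
  split_ifs <;> push_cast <;> linarith

lemma gammaD_zero {mu : ℝ} (hmu : -1 / 2 < mu) : gammaD mu 0 = 1 := by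
  have : Real.Gamma (mu + 1 / 2) ≠ 0 := (Real.Gamma_pos_of_pos (by linarith)).ne'
  norm_num [gammaD, this]

lemma gammaD_succ {mu : ℝ} (hmu : -1 / 2 < mu) (k : ℕ) :
    gammaD mu (k + 1) = dunklBracket mu (k + 1) * gammaD mu k := by
  obtain ⟨m, rfl | rfl⟩ := Nat.even_or_odd' k
  · have hodd : ¬Even (2 * m + 1) := Nat.not_even_iff_odd.mpr (odd_two_mul_add_one m)
    have hdiv : (2 * m + 1) / 2 = m := by omega
    have hGamma : Real.Gamma ((m : ℝ) + mu + 3 / 2)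
        = ((m : ℝ) + mu + 1 / 2) * Real.Gamma ((m : ℝ) + mu + 1 / 2) := by
      have : (0 : ℝ) < m + mu + 1 / 2 := by linarith [(m.cast_nonneg : (0 : ℝ) ≤ m)]
      rw [← Real.Gamma_add_one this.ne']
      ring_nf
    simp only [gammaD, dunklBracket, theta, if_neg hodd, even_two_mul, if_true,
      hdiv, Nat.mul_div_cancel_left m two_pos, hGamma]
    push_cast
    ring
  · have hodd : ¬Even (2 * m + 1) := Nat.not_even_iff_odd.mpr (odd_two_mul_add_one m)
    have heven : Even (2 * m + 1 + 1) := ⟨m + 1, by omega⟩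
    have hdiv : (2 * m + 1) / 2 = m := by omega
    have hdiv' : (2 * m + 1 + 1) / 2 = m + 1 := by omega
    simp only [gammaD, dunklBracket, theta, if_neg hodd, if_pos heven, hdiv, hdiv',
      Nat.factorial_succ]
    push_cast
    ring_nf

lemma gammaD_pos {mu : ℝ} (hmu : -1 / 2 < mu) (k : ℕ) : 0 < gammaD mu k := by
  induction k with
  | zero => simp [gammaD_zero hmu]
  | succ k ih => rw [gammaD_succ hmu]; exact mul_pos (dunklBracket_succ_pos hmu k) ih

lemma factorial_le_gammaD {mu : ℝ} (hmu : 0 ≤ mu) (k : ℕ) : (k.factorial : ℝ) ≤ gammaD mu k := by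
  have hmu' : -1 / 2 < mu := by linarith
  induction k with
  | zero => simp [gammaD_zero hmu']
  | succ k ih =>
    have hk : (k : ℝ) + 1 ≤ dunklBracket mu (k + 1) := by
      unfold dunklBracket
      push_cast
      linarith [mul_nonneg (mul_nonneg zero_le_two hmu) (theta_nonneg (k + 1))]
    rw [gammaD_succ hmu', Nat.factorial_succ]
    push_cast
    gcongr
    linarith

lemma summable_pow_div_gammaD {mu : ℝ} (hmu : 0 ≤ mu) (y : ℝ) :
    Summable (fun k : ℕ => y ^ k / gammaD mu k) := by
  refine .of_norm_bounded (Real.summable_pow_div_factorial |y|) fun k => ?_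
  rw [Real.norm_eq_abs, abs_div, abs_pow, abs_of_pos (gammaD_pos (by linarith) k)]
  gcongr
  exact factorial_le_gammaD hmu k

lemma hasSum_eD {mu : ℝ} (hmu : 0 ≤ mu) (y : ℝ) :
    HasSum (fun k : ℕ => y ^ k / gammaD mu k) (eD mu y) :=
  (summable_pow_div_gammaD hmu y).hasSum

lemma one_le_eD {mu y : ℝ} (hmu : 0 ≤ mu) (hy : 0 ≤ y) : 1 ≤ eD mu y := by
  have hmu' : -1 / 2 < mu := by linarith
  simpa [eD, gammaD_zero hmu'] using (summable_pow_div_gammaD hmu y).le_tsum 0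
    fun k _ => div_nonneg (pow_nonneg hy k) (gammaD_pos hmu' k).le

lemma dunklBracket_succ_mul_pow_div_gammaD {mu : ℝ} (hmu : -1 / 2 < mu) (y : ℝ) (k : ℕ) :
    dunklBracket mu (k + 1) * (y ^ (k + 1) / gammaD mu (k + 1)) = y * (y ^ k / gammaD mu k) := by
  have := (dunklBracket_succ_pos hmu k).ne'
  have := (gammaD_pos hmu k).ne'
  rw [gammaD_succ hmu]
  field_simp
  ring

lemma hasSum_dunklBracket_mul {mu : ℝ} (hmu : 0 ≤ mu) (y : ℝ) :
    HasSum (fun k : ℕ => dunklBracket mu k * (y ^ k / gammaD mu k)) (y * eD mu y) := by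
  rw [← hasSum_nat_add_iff' 1]
  simpa [dunklBracket_zero, dunklBracket_succ_mul_pow_div_gammaD (show -1 / 2 < mu by linarith)]
    using (hasSum_eD hmu y).mul_left y

lemma hasSum_dunklBracket_sq_mul {mu : ℝ} (hmu : 0 ≤ mu) (y : ℝ) :
    HasSum (fun k : ℕ => dunklBracket mu k ^ 2 * (y ^ k / gammaD mu k))
      ((y ^ 2 + y) * eD mu y + 2 * mu * y * eD mu (-y)) := by
  have hsum := (((hasSum_dunklBracket_mul hmu y).add (hasSum_eD hmu y)).add
    ((hasSum_eD hmu (-y)).mul_left (2 * mu))).mul_left y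
  have hshift (k : ℕ) : dunklBracket mu (k + 1) ^ 2 * (y ^ (k + 1) / gammaD mu (k + 1))
      = y * (dunklBracket mu k * (y ^ k / gammaD mu k) + y ^ k / gammaD mu k
        + 2 * mu * ((-y) ^ k / gammaD mu k)) := by
    rw [sq, mul_assoc, dunklBracket_succ_mul_pow_div_gammaD (by linarith), dunklBracket_succ,
      neg_pow]
    ring
  refine (hasSum_nat_add_iff' 1).mp ?_
  simp only [hshift, Finset.sum_range_one, dunklBracket_zero]
  convert hsum using 1
  · rfl
  · ring

lemma integral_mul_add_sq {n : ℝ} (hn : n ≠ 0) (a c : ℝ) :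
    ∫ t in c / n..(c + 1) / n, (n * t + a) ^ 2 = ((c + a) ^ 2 + (c + a) + 1 / 3) / n := by
  rw [intervalIntegral.integral_comp_mul_add (fun t => t ^ 2) hn, integral_pow,
    mul_div_cancel₀ _ hn, mul_div_cancel₀ _ hn]
  simp only [smul_eq_mul]
  field_simp
  ring

lemma integral_kantorovich_sq (mu a b : ℝ) {n : ℝ} (hn : n ≠ 0) (k : ℕ) :
    ∫ t in ((k : ℝ) + 2 * mu * theta k) / n..((k : ℝ) + 1 + 2 * mu * theta k) / n,
        ((n * t + a) / (n + b)) ^ 2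
      = ((dunklBracket mu k + a) ^ 2 + (dunklBracket mu k + a) + 1 / 3) / (n * (n + b) ^ 2) := by
  have h := integral_mul_add_sq hn a (dunklBracket mu k)
  rw [dunklBracket, add_right_comm] at h
  simp only [div_pow, intervalIntegral.integral_div, h, div_div, dunklBracket]

theorem KnStar_sq_general (mu a b : ℝ) (hmu : 0 ≤ mu)
    (n : ℕ) (hn : 0 < n) (x : ℝ) (hx : 1 / 2 ≤ x) :
    KnStar mu a b n (fun t => t ^ 2) x
      = (n / (n + b)) ^ 2 * x ^ 2
        + (n / (n + b) ^ 2) * (1 + 2 * a + 2 * mu * eD mu (-(n * rn n x)) / eD mu (n * rn n x)) * x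
        + (1 / (n + b) ^ 2)
            * (a ^ 2 - (5 / 12 + mu * eD mu (-(n * rn n x)) / eD mu (n * rn n x))) := by
  have hn' : (n : ℝ) ≠ 0 := by positivity
  rw [KnStar]
  set y := (n : ℝ) * rn n x with hy_def
  have hy : y = n * x - 1 / 2 := by
    rw [hy_def, rn]
    field_simp
  have hy_nonneg : 0 ≤ y := by
    have : (1 : ℝ) ≤ n := by exact_mod_cast hn
    nlinarith
  have he : eD mu y ≠ 0 := (zero_lt_one.trans_le (one_le_eD hmu hy_nonneg)).ne'
  have hsum := ((((hasSum_dunklBracket_sq_mul hmu y).add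
    ((hasSum_dunklBracket_mul hmu y).mul_left (2 * a + 1))).add
    ((hasSum_eD hmu y).mul_left (a ^ 2 + a + 1 / 3))).div_const ((n : ℝ) * (n + b) ^ 2))
  have hterm (k : ℕ) : y ^ k / gammaD mu k *
      ∫ t in ((k : ℝ) + 2 * mu * theta k) / n..((k : ℝ) + 1 + 2 * mu * theta k) / n,
        ((n * t + a) / (n + b)) ^ 2
      = (dunklBracket mu k ^ 2 * (y ^ k / gammaD mu k)
          + (2 * a + 1) * (dunklBracket mu k * (y ^ k / gammaD mu k))
          + (a ^ 2 + a + 1 / 3) * (y ^ k / gammaD mu k)) / (n * (n + b) ^ 2) := by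
    rw [integral_kantorovich_sq mu a b hn']
    ring
  rw [tsum_congr hterm, hsum.tsum_eq]
  -- `n + b` enters only through the common factor `(n + b)⁻²`, so it can stay opaque
  generalize (n : ℝ) + b = B
  field_simp
  rw [hy]
  ring

theorem KnStar_sq (mu a b : ℝ) (hmu : 0 ≤ mu) (ha : 0 ≤ a) (hab : a ≤ b)
    (n : ℕ) (hn : 0 < n) (x : ℝ) (hx : 1 / 2 ≤ x) :
    KnStar mu a b n (fun t => t ^ 2) x
      = (n / (n + b)) ^ 2 * x ^ 2
        + (n / (n + b) ^ 2) * (1 + 2 * a + 2 * mu * eD mu (-(n * rn n x)) / eD mu (n * rn n x)) * x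
        + (1 / (n + b) ^ 2)
            * (a ^ 2 - (5 / 12 + mu * eD mu (-(n * rn n x)) / eD mu (n * rn n x))) :=
  KnStar_sq_general mu a b hmu n hn x hx
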